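/- arXiv:2307.01353 — 2 statements merged into one kernel-verified Lean document; each statement's English description precedes it below -/
import Mathlib

section
/- Let B be a semisimple algebra with distinguished idempotents e₁,…,e_m, let B̃ = ⊕_{i,j} e_i B e_j be the painted algebra, and for a B-module M define the painted module M̃ = ⊕_i e_i M. Then for any simple B-module S, the painted module S̃ is either zero or a simple B̃-module. -/
open Finset

/-- Absorption: if `a` is idempotent and `a * x * b = x` then `a * x = x`. -/
theorem absorb_left {B : Type*} [Ring B] {a b x : B} (ha : a * a = a)
    (h : a * x * b = x) : a * x = x := by
  conv_lhs => rw [← h]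
  rw [← mul_assoc, ← mul_assoc, ha, h]

theorem absorb_right {B : Type*} [Ring B] {a b x : B} (hb : b * b = b)
    (h : a * x * b = x) : x * b = x := by
  conv_lhs => rw [← h]
  rw [mul_assoc (a * x) b b, hb, h]

/-- A family of distinguished idempotents in a ring `B`. -/
structure IdemFamily (B : Type*) [Ring B] (m : ℕ) where
  e : Fin m → B
  idem : ∀ i, e i * e i = e i

variable {B : Type*} [Ring B] {m : ℕ}

/-- The painted algebra `B̃ = ⊕_{i,j} e_i B e_j`, realized as the non-unital subring of
`m × m` matrices over `B` whose `(i,j)` entry lies in `e_i B e_j`.  Its multiplication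
`(e_i b e_j)·(e_k b' e_ℓ) = δ_{jk} e_i b e_j b' e_ℓ` is exactly matrix multiplication. -/
def paintedSubring (E : IdemFamily B m) : NonUnitalSubring (Matrix (Fin m) (Fin m) B) where
  carrier := {x | ∀ i j, E.e i * x i j * E.e j = x i j}
  zero_mem' := by intro i j; simp
  add_mem' := by
    intro x y hx hy i j
    have : (x + y) i j = x i j + y i j := rfl
    rw [this, mul_add, add_mul, hx i j, hy i j]
  neg_mem' := by
    intro x hx i j
    have : (-x) i j = -(x i j) := rfl
    rw [this, mul_neg, neg_mul, hx i j]
  mul_mem' := by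
    intro x y hx hy i j
    show E.e i * (x * y) i j * E.e j = (x * y) i j
    simp only [Matrix.mul_apply, Finset.mul_sum, Finset.sum_mul]
    refine Finset.sum_congr rfl fun l _ => ?_
    rw [← mul_assoc, absorb_left (E.idem i) (hx i l), mul_assoc,
      absorb_right (E.idem j) (hy l j)]

/-- The painted algebra associated to a family of idempotents. -/
def PaintedAlgebra (E : IdemFamily B m) : Type _ := ↥(paintedSubring E)

instance (E : IdemFamily B m) : NonUnitalRing (PaintedAlgebra E) :=
  inferInstanceAs (NonUnitalRing ↥(paintedSubring E))

/-- The painted algebra is a (unital) ring, with unit the diagonal matrix `diag(e₁,…,e_m)`. -/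
instance (E : IdemFamily B m) : Ring (PaintedAlgebra E) :=
  { (inferInstance : NonUnitalRing (PaintedAlgebra E)) with
    one := ⟨Matrix.diagonal E.e, by
      intro i j
      by_cases h : i = j
      · subst h; simp [Matrix.diagonal_apply_eq, E.idem i]
      · simp [Matrix.diagonal_apply_ne _ h]⟩
    one_mul := by
      intro x
      apply Subtype.ext
      ext i j
      show (Matrix.diagonal E.e * x.val) i j = x.val i j
      rw [Matrix.diagonal_mul]
      exact absorb_left (E.idem i) (x.prop i j)
    mul_one := by
      intro x
      apply Subtype.ext
      ext i j
      show (x.val * Matrix.diagonal E.e) i j = x.val i j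
      rw [Matrix.mul_diagonal]
      exact absorb_right (E.idem j) (x.prop i j) }
/-- The painted module `M̃ = ⊕_i e_i M`, realized as the additive subgroup of `Fin m → M`
consisting of tuples with `i`-th coordinate in `e_i M`. -/
def paintedSubgroup (E : IdemFamily B m) (M : Type*) [AddCommGroup M] [Module B M] :
    AddSubgroup (Fin m → M) where
  carrier := {v | ∀ i, E.e i • v i = v i}
  zero_mem' := by intro i; simp
  add_mem' := by
    intro v w hv hw i
    have : (v + w) i = v i + w i := rfl
    rw [this, smul_add, hv i, hw i]
  neg_mem' := by
    intro v hv i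
    have : (-v) i = -(v i) := rfl
    rw [this, smul_neg, hv i]

/-- The painted module associated to a `B`-module `M`. -/
def PaintedModule (E : IdemFamily B m) (M : Type*) [AddCommGroup M] [Module B M] : Type _ :=
  ↥(paintedSubgroup E M)

instance (E : IdemFamily B m) (M : Type*) [AddCommGroup M] [Module B M] :
    AddCommGroup (PaintedModule E M) :=
  inferInstanceAs (AddCommGroup ↥(paintedSubgroup E M))

instance (E : IdemFamily B m) (M : Type*) [AddCommGroup M] [Module B M] :
    SMul (PaintedAlgebra E) (PaintedModule E M) where
  smul x v := ⟨fun i => ∑ j, x.val i j • v.val j, by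
    intro i
    rw [Finset.smul_sum]
    refine Finset.sum_congr rfl fun j _ => ?_
    rw [← mul_smul, absorb_left (E.idem i) (x.prop i j)]⟩

theorem painted_smul_apply (E : IdemFamily B m) (M : Type*) [AddCommGroup M] [Module B M]
    (x : PaintedAlgebra E) (v : PaintedModule E M) (i : Fin m) :
    (x • v).val i = ∑ j, x.val i j • v.val j := rfl

/-- The painted module is a module over the painted algebra, with the action
`(e_i b e_j) • (e_k m) = δ_{jk} (e_i b e_j) • m`  (matrix–vector multiplication). -/
instance (E : IdemFamily B m) (M : Type*) [AddCommGroup M] [Module B M] :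
    Module (PaintedAlgebra E) (PaintedModule E M) where
  one_smul v := by
    apply Subtype.ext
    funext i
    rw [painted_smul_apply]
    show (∑ j, Matrix.diagonal E.e i j • v.val j) = v.val i
    rw [Finset.sum_eq_single i]
    · rw [Matrix.diagonal_apply_eq]; exact v.prop i
    · intro j _ hj
      rw [Matrix.diagonal_apply_ne _ (Ne.symm hj), zero_smul]
    · intro h; exact absurd (Finset.mem_univ i) h
  mul_smul x y v := by
    apply Subtype.ext
    funext i
    rw [painted_smul_apply]
    show (∑ j, (x.val * y.val) i j • v.val j) = ∑ j, x.val i j • (y • v).val j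
    simp only [Matrix.mul_apply, painted_smul_apply, Finset.sum_smul, Finset.smul_sum,
      mul_smul]
    exact Finset.sum_comm
  smul_zero x := by
    apply Subtype.ext
    funext i
    rw [painted_smul_apply]
    show (∑ j, x.val i j • (0 : M)) = 0
    simp
  smul_add x v w := by
    apply Subtype.ext
    funext i
    simp only [painted_smul_apply]
    show (∑ j, x.val i j • (v.val j + w.val j)) = _
    simp only [smul_add, Finset.sum_add_distrib]
    rfl
  add_smul x y v := by
    apply Subtype.ext
    funext i
    simp only [painted_smul_apply]
    show (∑ j, (x.val i j + y.val i j) • v.val j) = _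
    simp only [add_smul, Finset.sum_add_distrib]
    rfl
  zero_smul v := by
    apply Subtype.ext
    funext i
    rw [painted_smul_apply]
    show (∑ j, (0 : Matrix (Fin m) (Fin m) B) i j • v.val j) = 0
    simp

namespace PaintedAlgebra

variable (E : IdemFamily B m)

def single (i j : Fin m) (b : B) : PaintedAlgebra E :=
  ⟨Matrix.single i j (E.e i * b * E.e j), fun i' j' => by
    by_cases h : i = i' ∧ j = j'
    · obtain ⟨rfl, rfl⟩ := h
      rw [Matrix.single_apply_same]
      simp only [mul_assoc, E.idem]
      rw [← mul_assoc (E.e i), E.idem]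
    · rw [Matrix.single_apply_of_ne _ _ _ _ _ h, mul_zero, zero_mul]⟩

theorem val_single (i j : Fin m) (b : B) :
    (single E i j b).val = Matrix.single i j (E.e i * b * E.e j) := rfl

end PaintedAlgebra

namespace PaintedModule

variable {E : IdemFamily B m} {M : Type*} [AddCommGroup M] [Module B M]

@[ext]
theorem ext {v w : PaintedModule E M} (h : ∀ i, v.val i = w.val i) : v = w :=
  Subtype.ext (funext h)

theorem val_sum {ι : Type*} (s : Finset ι) (v : ι → PaintedModule E M) :
    (∑ a ∈ s, v a).val = ∑ a ∈ s, (v a).val :=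
  AddSubmonoidClass.coe_finsetSum v s

theorem exists_val_ne_zero {v : PaintedModule E M} (hv : v ≠ 0) : ∃ k, v.val k ≠ 0 := by
  by_contra! h
  exact hv (ext h)

theorem val_single_smul (i k : Fin m) (b : B) (v : PaintedModule E M) :
    (PaintedAlgebra.single E i k b • v).val = Pi.single i (E.e i • b • v.val k) := by
  funext l
  rw [painted_smul_apply, PaintedAlgebra.val_single, Fintype.sum_eq_single k fun j hj => by
    rw [Matrix.single_apply_of_col_ne _ _ (Ne.symm hj), zero_smul]]
  by_cases hl : l = i
  · subst hl
    rw [Matrix.single_apply_same, Pi.single_eq_same, mul_smul, mul_smul, v.prop k]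
  · rw [Matrix.single_apply_of_row_ne (Ne.symm hl), Pi.single_eq_of_ne hl, zero_smul]

/-- Since `B v_k = M`, choosing `b_j` with `b_j v_k = w_j` gives `w = ∑ j, single j k b_j • v`. -/
theorem span_singleton_eq_top [IsSimpleModule B M] {v : PaintedModule E M} {k : Fin m}
    (hk : v.val k ≠ 0) : Submodule.span (PaintedAlgebra E) {v} = ⊤ := by
  refine Submodule.eq_top_iff'.mpr fun w => ?_
  choose b hb using fun j => IsSimpleModule.toSpanSingleton_surjective B hk (w.val j)
  simp only [LinearMap.toSpanSingleton_apply] at hb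
  have hw : w = ∑ j, PaintedAlgebra.single E j k (b j) • v := by
    ext i
    simp only [val_sum, val_single_smul, Finset.sum_apply]
    rw [Fintype.sum_pi_single, hb, w.prop i]
  rw [hw]
  exact Submodule.sum_mem _ fun j _ => Submodule.smul_mem _ _ (Submodule.mem_span_singleton_self v)

end PaintedModule

theorem stmt5_general {B : Type*} [Ring B] {m : ℕ} (E : IdemFamily B m)
    (S : Type*) [AddCommGroup S] [Module B S] (hS : IsSimpleModule B S) :
    (∀ v : PaintedModule E S, v = 0) ∨
      IsSimpleModule (PaintedAlgebra E) (PaintedModule E S) := by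
  by_cases hzero : ∀ v : PaintedModule E S, v = 0
  · exact Or.inl hzero
  push Not at hzero
  obtain ⟨v₀, hv₀⟩ := hzero
  refine Or.inr (isSimpleModule_iff_toSpanSingleton_surjective.mpr ⟨⟨v₀, 0, hv₀⟩, fun v hv => ?_⟩)
  obtain ⟨k, hk⟩ := PaintedModule.exists_val_ne_zero hv
  rw [← LinearMap.range_eq_top, ← LinearMap.span_singleton_eq_range]
  exact PaintedModule.span_singleton_eq_top hk

/-- Let `B` be a semisimple algebra with distinguished idempotents
`e₁,…,e_m`, and let `B̃` be the painted algebra.  For any simple `B`-module `S`, the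
painted module `S̃ = ⊕_i e_i S` is either zero or a simple `B̃`-module. -/
theorem stmt5 {B : Type*} [Ring B] [IsSemisimpleRing B] {m : ℕ} (E : IdemFamily B m)
    (S : Type*) [AddCommGroup S] [Module B S] (hS : IsSimpleModule B S) :
    (∀ v : PaintedModule E S, v = 0) ∨
      IsSimpleModule (PaintedAlgebra E) (PaintedModule E S) :=
  stmt5_general E S hS
end

section
/- Let a, b ∈ W_{r,k}, π ∈ Π_{2(r)}, and π̃ = κ_{a,b}(π). Let A^π_{a,b} be the subgroup of permutations of the barred part of π that permute whole blocks of π|_{barred}, moving a block onto another only when the blocks of π containing them have the same image under κ_{a,b}. Then |A^π_{a,b}| = m(π̃)!/m(π̃₊)!, where π̃₊ is the multiset of blocks of π̃ contained entirely in the unbarred alphabet. -/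
open Finset
open scoped Classical

variable {r k : ℕ}

/-- The coloring map `κ_{a,b}` on the two-row alphabet: unbarred elements are colored by
`f` and barred elements by `g`. -/
def colorOf (f g : Fin r → Fin k) : Fin r ⊕ Fin r → Fin k ⊕ Fin k := Sum.map f g

/-- The colored image of a single block. -/
def coloredBlock (f g : Fin r → Fin k) (B : Finset (Fin r ⊕ Fin r)) :
    Multiset (Fin k ⊕ Fin k) :=
  B.val.map (colorOf f g)

/-- The multiset partition `κ_{a,b}(π)`. -/
def coloredP (f g : Fin r → Fin k) (P : Finpartition (univ : Finset (Fin r ⊕ Fin r))) :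
    Multiset (Multiset (Fin k ⊕ Fin k)) :=
  P.parts.val.map fun B => B.val.map (colorOf f g)

/-- The barred part of a block, as a subset of `[r]`. -/
def barPart (B : Finset (Fin r ⊕ Fin r)) : Finset (Fin r) :=
  univ.filter fun i => Sum.inr i ∈ B

/-- `m(ρ̃)!` : the product over the distinct blocks of the factorial of the multiplicity. -/
noncomputable def mfact {β : Type*} (s : Multiset β) : ℕ :=
  ∏ b ∈ s.toFinset, (s.count b).factorial

/-- `π̃₊` : the blocks of a colored multiset partition contained entirely in the unbarred
(top) alphabet. -/
noncomputable def topOnly (M : Multiset (Multiset (Fin k ⊕ Fin k))) :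
    Multiset (Multiset (Fin k ⊕ Fin k)) :=
  M.filter fun Bl => ∀ x ∈ Bl, x.isLeft = true

/-!
An admissible `σ` permutes the blocks of `π` that meet the barred alphabet, preserving their
colours, and it is determined by this block permutation `τ`, since a monotone bijection between
two finite chains is unique. Conversely, every colour-preserving `τ` comes from the permutation
that maps each barred part monotonically onto the barred part of its image; this permutation
preserves `g` because `g` is monotone and the two barred parts carry the same multiset of
`g`-values. So `|A^π_{a,b}|` counts the colour-preserving permutations of the blocks meeting the
barred alphabet, which is `m` of the multiset of their colours, i.e. of the blocks of `π̃` outside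
`π̃₊`.
-/

open Equiv

section SortedMaps
variable {α β : Type*} [LinearOrder α] [LinearOrder β]

lemma Finset.map_sort_eq_of_monotone {g : α → β} (hg : Monotone g) {s t : Finset α}
    (h : s.val.map g = t.val.map g) : s.sort.map g = t.sort.map g := by
  refine List.Perm.eq_of_pairwise' ((s.pairwise_sort _).map g fun _ _ => (hg ·))
    ((t.pairwise_sort _).map g fun _ _ => (hg ·)) ?_
  rw [← Multiset.coe_eq_coe, ← Multiset.map_coe, ← Multiset.map_coe, sort_eq, sort_eq, h]

lemma StrictMonoOn.map_sort {φ : α → β} {s : Finset α} (hφ : StrictMonoOn φ s) :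
    s.sort.map φ = (s.image φ).sort := by
  rw [← Finset.sort_val, Multiset.map_sort φ s.val (· ≤ ·) (· ≤ ·)
    fun _ ha _ hb => (hφ.le_iff_le ha hb).symm, ← Finset.image_val_of_injOn hφ.injOn, sort_val]

lemma StrictMonoOn.eqOn_of_image_eq {φ ψ : α → β} {s : Finset α} (hφ : StrictMonoOn φ s)
    (hψ : StrictMonoOn ψ s) (h : s.image φ = s.image ψ) : Set.EqOn φ ψ s := fun x hx =>
  List.map_inj_left.mp (by rw [hφ.map_sort, hψ.map_sort, h]) x (Finset.mem_sort _ |>.mpr hx)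

/-- Both `s` and its image under `φ` list their `g`-values in the same sorted order, and `φ`
matches up the two sorted lists. -/
lemma StrictMonoOn.eqOn_comp_of_map_eq {φ : α → α} {g : α → β} {s : Finset α}
    (hφ : StrictMonoOn φ s) (hg : Monotone g) (h : s.val.map g = (s.image φ).val.map g) :
    Set.EqOn (g ∘ φ) g s := fun x hx =>
  List.map_inj_left.mp (by rw [← List.map_map, hφ.map_sort,
    Finset.map_sort_eq_of_monotone hg h]) x (Finset.mem_sort _ |>.mpr hx)

def Finset.orderIsoOfCardEq {s t : Finset α} (h : #s = #t) : s ≃o t :=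
  (s.orderIsoOfFin rfl).symm.trans (t.orderIsoOfFin h.symm)

end SortedMaps

lemma card_comp_perm_eq_mfact {γ δ : Type*} [Fintype γ] (c : γ → δ) :
    Nat.card {σ : Perm γ // c ∘ σ = c} = mfact ((univ : Finset γ).val.map c) := by
  rw [Nat.card_eq_fintype_card, DomMulAct.stabilizer_card', mfact]
  refine Finset.prod_congr rfl fun b _ => ?_
  rw [Multiset.count_map, Fintype.card_subtype, ← Finset.filter_val, Finset.card_val]
  simp_rw [eq_comm]

lemma mfact_filter_not_mul_mfact_filter {β : Type*} (s : Multiset β) (p : β → Prop)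
    [DecidablePred p] : mfact (s.filter (¬ p ·)) * mfact (s.filter p) = mfact s := by
  have (q : β → Prop) [DecidablePred q] :
      mfact (s.filter q) = ∏ b ∈ s.toFinset.filter q, (s.count b).factorial := by
    rw [mfact, Multiset.toFinset_filter]
    exact Finset.prod_congr rfl fun b hb =>
      by rw [Multiset.count_filter_of_pos (Finset.mem_filter.mp hb).2]
  rw [this, this, mfact, mul_comm]
  exact Finset.prod_filter_mul_prod_filter_not _ _ _

section BarredParts
variable (f g : Fin r → Fin k)

lemma mem_barPart {B : Finset (Fin r ⊕ Fin r)} {i : Fin r} :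
    i ∈ barPart B ↔ Sum.inr i ∈ B := by
  simp [barPart]

lemma barPart_eq_toRight (B : Finset (Fin r ⊕ Fin r)) : barPart B = B.toRight := by
  ext i; simp [mem_barPart]

lemma map_barPart_val (B : Finset (Fin r ⊕ Fin r)) :
    (barPart B).val.map g = (coloredBlock f g B).filterMap (Sum.elim (fun _ => none) some) := by
  rw [barPart_eq_toRight, coloredBlock, Multiset.filterMap_map]
  refine (Multiset.map_filterMap _ _ _).trans (congrArg (Multiset.filterMap · _) ?_)
  funext x
  cases x <;> rfl

lemma map_barPart_val_eq_of_coloredBlock_eq {B C : Finset (Fin r ⊕ Fin r)}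
    (h : coloredBlock f g B = coloredBlock f g C) :
    (barPart B).val.map g = (barPart C).val.map g := by
  rw [map_barPart_val, map_barPart_val, h]

lemma card_barPart_eq_of_coloredBlock_eq {B C : Finset (Fin r ⊕ Fin r)}
    (h : coloredBlock f g B = coloredBlock f g C) : #(barPart B) = #(barPart C) := by
  simpa using congrArg Multiset.card (map_barPart_val_eq_of_coloredBlock_eq f g h)

lemma barPart_nonempty_iff (B : Finset (Fin r ⊕ Fin r)) :
    (barPart B).Nonempty ↔ ¬ ∀ x ∈ coloredBlock f g B, x.isLeft = true := by
  simp [Finset.Nonempty, mem_barPart, coloredBlock, colorOf]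

end BarredParts

namespace Finpartition
variable (P : Finpartition (univ : Finset (Fin r ⊕ Fin r)))

abbrev BarredBlock := {B // B ∈ P.parts ∧ (barPart B).Nonempty}

def barredBlockOf (i : Fin r) : P.BarredBlock :=
  ⟨P.part (.inr i), P.part_mem.mpr (mem_univ _), i, mem_barPart.mpr (P.mem_part (mem_univ _))⟩

variable {P}

lemma mem_barPart_iff_barredBlockOf_eq {B : P.BarredBlock} {i : Fin r} :
    i ∈ barPart B.1 ↔ P.barredBlockOf i = B :=
  ⟨fun h => Subtype.ext (P.part_eq_of_mem B.2.1 (mem_barPart.mp h)),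
    fun h => h ▸ mem_barPart.mpr (P.mem_part (mem_univ _))⟩

lemma eq_of_barPart_eq {B C : Finset (Fin r ⊕ Fin r)} (hB : B ∈ P.parts) (hC : C ∈ P.parts)
    (hne : (barPart B).Nonempty) (h : barPart B = barPart C) : B = C := by
  obtain ⟨i, hi⟩ := hne
  exact P.eq_of_mem_parts hB hC (mem_barPart.mp hi) (mem_barPart.mp (h ▸ hi))

lemma BarredBlock.ext_barPart {B C : P.BarredBlock} (h : barPart B.1 = barPart C.1) : B = C :=
  Subtype.ext (eq_of_barPart_eq B.2.1 C.2.1 B.2.2 h)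

variable (P)

def barredSigmaEquiv : Fin r ≃ Σ B : P.BarredBlock, barPart B.1 :=
  (Equiv.sigmaFiberEquiv P.barredBlockOf).symm.trans
    (Equiv.sigmaCongrRight fun _ => Equiv.subtypeEquivRight fun _ =>
      mem_barPart_iff_barredBlockOf_eq.symm)

/-- The permutation of `Fin r` that carries the barred part of each block `B` monotonically onto
the barred part of `τ B`. -/
def permOfBlockPerm (τ : Perm P.BarredBlock) (hτ : ∀ B, #(barPart B.1) = #(barPart (τ B).1)) :
    Perm (Fin r) :=
  (P.barredSigmaEquiv.trans (Equiv.sigmaCongr τ fun B =>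
    (Finset.orderIsoOfCardEq (hτ B)).toEquiv)).trans P.barredSigmaEquiv.symm

variable {P}

lemma permOfBlockPerm_apply {τ : Perm P.BarredBlock}
    (hτ : ∀ B, #(barPart B.1) = #(barPart (τ B).1)) {B : P.BarredBlock} {i : Fin r}
    (hi : i ∈ barPart B.1) :
    P.permOfBlockPerm τ hτ i = Finset.orderIsoOfCardEq (hτ B) ⟨i, hi⟩ := by
  obtain rfl := mem_barPart_iff_barredBlockOf_eq.mp hi
  rfl

lemma strictMonoOn_permOfBlockPerm {τ : Perm P.BarredBlock}
    (hτ : ∀ B, #(barPart B.1) = #(barPart (τ B).1)) (B : P.BarredBlock) :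
    StrictMonoOn (P.permOfBlockPerm τ hτ) (barPart B.1) := fun i hi j hj hij => by
  rw [permOfBlockPerm_apply hτ hi, permOfBlockPerm_apply hτ hj]
  exact (Finset.orderIsoOfCardEq (hτ B)).strictMono (Subtype.mk_lt_mk.mpr hij)

lemma image_barPart_permOfBlockPerm {τ : Perm P.BarredBlock}
    (hτ : ∀ B, #(barPart B.1) = #(barPart (τ B).1)) (B : P.BarredBlock) :
    (barPart B.1).image (P.permOfBlockPerm τ hτ) = barPart (τ B).1 := by
  refine Finset.eq_of_subset_of_card_le (fun j hj => ?_) ?_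
  · obtain ⟨i, hi, rfl⟩ := Finset.mem_image.mp hj
    rw [permOfBlockPerm_apply hτ hi]
    exact Subtype.prop _
  · rw [Finset.card_image_of_injective _ (Equiv.injective _)]
    exact (hτ B).ge

end Finpartition

section Admissible
variable (f g : Fin r → Fin k) (P : Finpartition (univ : Finset (Fin r ⊕ Fin r)))

/-- Membership in `A^π_{a,b}`. -/
def IsAdmissible (σ : Perm (Fin r)) : Prop :=
  (g ∘ ⇑σ = g) ∧
  (∀ B ∈ P.parts, (barPart B).Nonempty →
    ∃ C ∈ P.parts, (barPart B).image ⇑σ = barPart C ∧ MonotoneOn ⇑σ ↑(barPart B)) ∧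
  (∀ B ∈ P.parts, ∀ C ∈ P.parts, (barPart C).Nonempty →
    (barPart C).image ⇑σ = barPart B →
    coloredBlock f g B = coloredBlock f g C)

def blockColor (B : P.BarredBlock) : Multiset (Fin k ⊕ Fin k) := coloredBlock f g B.1

variable {f g P}

noncomputable def imageBlock {σ : Perm (Fin r)} (hσ : IsAdmissible f g P σ)
    (B : P.BarredBlock) : P.BarredBlock :=
  have h := hσ.2.1 B.1 B.2.1 B.2.2
  ⟨h.choose, h.choose_spec.1, h.choose_spec.2.1 ▸ B.2.2.image σ⟩

lemma image_barPart_eq_imageBlock {σ : Perm (Fin r)} (hσ : IsAdmissible f g P σ)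
    (B : P.BarredBlock) : (barPart B.1).image σ = barPart (imageBlock hσ B).1 :=
  (hσ.2.1 B.1 B.2.1 B.2.2).choose_spec.2.1

lemma strictMonoOn_of_isAdmissible {σ : Perm (Fin r)} (hσ : IsAdmissible f g P σ)
    (B : P.BarredBlock) : StrictMonoOn σ (barPart B.1) :=
  (hσ.2.1 B.1 B.2.1 B.2.2).choose_spec.2.2.strictMonoOn_of_injOn σ.injective.injOn

lemma imageBlock_injective {σ : Perm (Fin r)} (hσ : IsAdmissible f g P σ) :
    Function.Injective (imageBlock hσ) := fun B C h =>
  Finpartition.BarredBlock.ext_barPart <| Finset.image_injective σ.injective <| by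
    rw [image_barPart_eq_imageBlock hσ, image_barPart_eq_imageBlock hσ, h]

noncomputable def blockPerm {σ : Perm (Fin r)} (hσ : IsAdmissible f g P σ) :
    Perm P.BarredBlock :=
  Equiv.ofBijective _ (Finite.injective_iff_bijective.mp (imageBlock_injective hσ))

lemma blockColor_comp_blockPerm {σ : Perm (Fin r)} (hσ : IsAdmissible f g P σ) :
    blockColor f g P ∘ blockPerm hσ = blockColor f g P :=
  funext fun B =>
    hσ.2.2 _ (imageBlock hσ B).2.1 B.1 B.2.1 B.2.2 (image_barPart_eq_imageBlock hσ B)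

lemma isAdmissible_permOfBlockPerm (hg : Monotone g) {τ : Perm P.BarredBlock}
    (hτ : blockColor f g P ∘ τ = blockColor f g P)
    (hcard : ∀ B, #(barPart B.1) = #(barPart (τ B).1)) :
    IsAdmissible f g P (P.permOfBlockPerm τ hcard) := by
  have hcolor (B : P.BarredBlock) : coloredBlock f g (τ B).1 = coloredBlock f g B.1 :=
    congrFun hτ B
  refine ⟨funext fun i => ?_, fun B hB hne => ?_, fun B hB C hC hne himg => ?_⟩
  · have hi : i ∈ barPart (P.barredBlockOf i).1 :=
      Finpartition.mem_barPart_iff_barredBlockOf_eq.mpr rfl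
    refine (Finpartition.strictMonoOn_permOfBlockPerm hcard _).eqOn_comp_of_map_eq hg ?_ hi
    rw [Finpartition.image_barPart_permOfBlockPerm]
    exact map_barPart_val_eq_of_coloredBlock_eq f g (hcolor _).symm
  · let B' : P.BarredBlock := ⟨B, hB, hne⟩
    exact ⟨(τ B').1, (τ B').2.1, Finpartition.image_barPart_permOfBlockPerm hcard B',
      (Finpartition.strictMonoOn_permOfBlockPerm hcard B').monotoneOn⟩
  · let C' : P.BarredBlock := ⟨C, hC, hne⟩
    rw [Finpartition.image_barPart_permOfBlockPerm hcard C'] at himg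
    obtain rfl := Finpartition.eq_of_barPart_eq hB (τ C').2.1 (himg ▸ (τ C').2.2) himg.symm
    exact hcolor C'

variable (f g P)

noncomputable def toColoredBlockPerm (σ : {σ // IsAdmissible f g P σ}) :
    {τ : Perm P.BarredBlock // blockColor f g P ∘ τ = blockColor f g P} :=
  ⟨blockPerm σ.2, blockColor_comp_blockPerm σ.2⟩

/-- Two admissible permutations inducing the same block permutation are monotone bijections
between the same barred parts, hence agree. -/
lemma toColoredBlockPerm_injective : Function.Injective (toColoredBlockPerm f g P) := by
  rintro ⟨σ, hσ⟩ ⟨σ', hσ'⟩ h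
  have hB (B : P.BarredBlock) : imageBlock hσ B = imageBlock hσ' B :=
    congrArg (fun τ => τ.1 B) h
  refine Subtype.ext (Equiv.ext fun i => ?_)
  have hi := Finpartition.mem_barPart_iff_barredBlockOf_eq.mpr (rfl : P.barredBlockOf i = _)
  refine (strictMonoOn_of_isAdmissible hσ _).eqOn_of_image_eq
    (strictMonoOn_of_isAdmissible hσ' _) ?_ hi
  rw [image_barPart_eq_imageBlock hσ, image_barPart_eq_imageBlock hσ', hB]

lemma toColoredBlockPerm_surjective (hg : Monotone g) :
    Function.Surjective (toColoredBlockPerm f g P) := by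
  rintro ⟨τ, hτ⟩
  have hcard (B : P.BarredBlock) : #(barPart B.1) = #(barPart (τ B).1) :=
    card_barPart_eq_of_coloredBlock_eq f g (congrFun hτ B).symm
  have hσ := isAdmissible_permOfBlockPerm hg hτ hcard
  refine ⟨⟨_, hσ⟩, Subtype.ext <| Equiv.ext fun B => ?_⟩
  refine Finpartition.BarredBlock.ext_barPart ?_
  change barPart (imageBlock hσ B).1 = _
  rw [← image_barPart_eq_imageBlock hσ, Finpartition.image_barPart_permOfBlockPerm]

noncomputable def admissibleEquiv (hg : Monotone g) :
    {σ // IsAdmissible f g P σ} ≃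
      {τ : Perm P.BarredBlock // blockColor f g P ∘ τ = blockColor f g P} :=
  Equiv.ofBijective _
    ⟨toColoredBlockPerm_injective f g P, toColoredBlockPerm_surjective f g P hg⟩

lemma map_blockColor_univ :
    (univ : Finset P.BarredBlock).val.map (blockColor f g P) =
      (coloredP f g P).filter fun Bl => ¬ ∀ x ∈ Bl, x.isLeft = true := by
  have hparts : (univ.filter fun B => B ∈ P.parts ∧ (barPart B).Nonempty) =
      P.parts.filter fun B => (barPart B).Nonempty := by
    ext; simp
  rw [show blockColor f g P = Subtype.restrict _ (coloredBlock f g) from rfl,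
    univ_val_map_subtype_restrict, hparts, filter_val, coloredP, Multiset.filter_map]
  simp only [barPart_nonempty_iff f g]
  rfl

end Admissible

theorem stmt15_general (f g : Fin r → Fin k) (hg : Monotone g)
    (P : Finpartition (univ : Finset (Fin r ⊕ Fin r))) :
    Nat.card {σ : Equiv.Perm (Fin r) //
        (g ∘ ⇑σ = g) ∧
        (∀ B ∈ P.parts, (barPart B).Nonempty →
          ∃ C ∈ P.parts, (barPart B).image ⇑σ = barPart C ∧ MonotoneOn ⇑σ ↑(barPart B)) ∧
        (∀ B ∈ P.parts, ∀ C ∈ P.parts, (barPart C).Nonempty →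
          (barPart C).image ⇑σ = barPart B →
          coloredBlock f g B = coloredBlock f g C)} *
      mfact (topOnly (coloredP f g P))
      = mfact (coloredP f g P) := by
  change Nat.card {σ // IsAdmissible f g P σ} * _ = _
  rw [Nat.card_congr (admissibleEquiv f g P hg), card_comp_perm_eq_mfact, map_blockColor_univ]
  exact mfact_filter_not_mul_mfact_filter _ _

/-- Let `a, b ∈ W_{r,k}` (encoded by their monotone coloring maps
`f, g`), `π ∈ Π_{2(r)}` and `π̃ = κ_{a,b}(π)`.  The subgroup `A^π_{a,b}`, consisting of
the permutations `σ ∈ S_b` of the barred alphabet that permute whole blocks of the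
restriction `π|_{barred}` order-preservingly, moving a barred block onto another only
when the blocks of `π` containing them have the same image under `κ_{a,b}`, has
cardinality `m(π̃)!/m(π̃₊)!`. -/
theorem stmt15 (f g : Fin r → Fin k) (hf : Monotone f) (hg : Monotone g)
    (P : Finpartition (univ : Finset (Fin r ⊕ Fin r))) :
    Nat.card {σ : Equiv.Perm (Fin r) //
        (g ∘ ⇑σ = g) ∧
        (∀ B ∈ P.parts, (barPart B).Nonempty →
          ∃ C ∈ P.parts, (barPart B).image ⇑σ = barPart C ∧ MonotoneOn ⇑σ ↑(barPart B)) ∧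
        (∀ B ∈ P.parts, ∀ C ∈ P.parts, (barPart C).Nonempty →
          (barPart C).image ⇑σ = barPart B →
          coloredBlock f g B = coloredBlock f g C)} *
      mfact (topOnly (coloredP f g P))
      = mfact (coloredP f g P) :=
  stmt15_general f g hg P
end
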